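/- Let C be closed and convex, x ∈ C a nonstationary point of min{f(y) : y ∈ C}, α > 0, ζ ∈ (0,1], z(α) = x − αD⁻¹∇f(x), and w(α) ∈ 𝒫_{C,ζ}^D(x, z(α)). Then ⟨∇f(x), w(α) − x⟩ < 0, i.e., w(α) − x is a descent direction for f at x. -/

import Mathlib

open RealInnerProductSpace

abbrev EucSp (n : ℕ) := EuclideanSpace ℝ (Fin n)

noncomputable def dipr {n : ℕ} (D : Matrix (Fin n) (Fin n) ℝ) (x y : EucSp n) : ℝ :=
  ⟪(Matrix.toEuclideanLin D) x, y⟫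

noncomputable def dnorm {n : ℕ} (D : Matrix (Fin n) (Fin n) ℝ) (x : EucSp n) : ℝ :=
  Real.sqrt (dipr D x x)

/-- `p` is the exact projection of `v` onto `C` in the `D`-norm. -/
def IsDProj {n : ℕ} (D : Matrix (Fin n) (Fin n) ℝ) (C : Set (EucSp n)) (v p : EucSp n) : Prop :=
  p ∈ C ∧ ∀ z ∈ C, dnorm D (p - v) ≤ dnorm D (z - v)

/-!
Write `q v = ‖v - z‖_D² = ⟪D (v - z), v - z⟫`. Since `D (x - z) = α g x`, expanding around `x`
gives `q w = q x + 2α ⟪g x, w - x⟫ + ‖w - x‖_D²`. A point `y ∈ C` with `⟪g x, y - x⟫ < 0` makes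
`q` strictly decrease along the segment from `x` to `y`, so the projection satisfies `q p < q x`;
then `q w ≤ ζ q p + (1 - ζ) q x < q x`, which forces `⟪g x, w - x⟫ < 0`.
-/

open Filter Topology

section QuadraticDistance

variable {E : Type*} [NormedAddCommGroup E] [InnerProductSpace ℝ E] {T : E →ₗ[ℝ] E}

lemma LinearMap.IsSymmetric.inner_map_add_add_self (hT : T.IsSymmetric) (u v : E) :
    ⟪T (u + v), u + v⟫ = ⟪T u, u⟫ + 2 * ⟪T u, v⟫ + ⟪T v, v⟫ := by
  have hvu : ⟪T v, u⟫ = ⟪T u, v⟫ := by rw [hT v u, real_inner_comm]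
  simp only [map_add, inner_add_left, inner_add_right, hvu]
  ring

lemma LinearMap.IsSymmetric.exists_mem_inner_map_sub_lt (hT : T.IsSymmetric) {C : Set E}
    (hC : Convex ℝ C) {x y z : E} (hx : x ∈ C) (hy : y ∈ C) (hxy : ⟪T (x - z), y - x⟫ < 0) :
    ∃ c ∈ C, ⟪T (c - z), c - z⟫ < ⟪T (x - z), x - z⟫ := by
  set b := ⟪T (x - z), y - x⟫
  set a := ⟪T (y - x), y - x⟫
  have hlim : Tendsto (fun t : ℝ => 2 * b + t * a) (𝓝[>] 0) (𝓝 (2 * b)) := by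
    have : Continuous fun t : ℝ => 2 * b + t * a := by fun_prop
    simpa using (this.tendsto 0).mono_left nhdsWithin_le_nhds
  obtain ⟨t, ⟨hta, ht1⟩, ht0⟩ :=
    (((hlim.eventually (gt_mem_nhds (by linarith))).and (Ioc_mem_nhdsGT one_pos)).and
      self_mem_nhdsWithin).exists
  refine ⟨x + t • (y - x), hC.add_smul_sub_mem hx hy ⟨le_of_lt ht0, ht1.2⟩, ?_⟩
  have hexpand : ⟪T (x + t • (y - x) - z), x + t • (y - x) - z⟫ =
      ⟪T (x - z), x - z⟫ + t * (2 * b + t * a) := by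
    rw [show x + t • (y - x) - z = (x - z) + t • (y - x) by abel, hT.inner_map_add_add_self]
    simp only [map_smul, inner_smul_left, inner_smul_right, RCLike.conj_to_real]
    ring
  rw [hexpand]
  nlinarith [show (0 : ℝ) < t from ht0]

theorem LinearMap.IsPositive.inner_map_sub_neg_of_le_combination {C : Set E} (hT : T.IsPositive)
    (hC : Convex ℝ C) {x y z p w : E} (hx : x ∈ C) (hy : y ∈ C)
    (hxy : ⟪T (x - z), y - x⟫ < 0)
    (hp : ∀ c ∈ C, ⟪T (p - z), p - z⟫ ≤ ⟪T (c - z), c - z⟫) {ζ : ℝ} (hζ : 0 < ζ)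
    (hw : ⟪T (w - z), w - z⟫ ≤ ζ * ⟪T (p - z), p - z⟫ + (1 - ζ) * ⟪T (x - z), x - z⟫) :
    ⟪T (x - z), w - x⟫ < 0 := by
  obtain ⟨c, hc, hcx⟩ := hT.isSymmetric.exists_mem_inner_map_sub_lt hC hx hy hxy
  have hpx : ⟪T (p - z), p - z⟫ < ⟪T (x - z), x - z⟫ := (hp c hc).trans_lt hcx
  have hexpand := hT.isSymmetric.inner_map_add_add_self (x - z) (w - x)
  rw [show x - z + (w - x) = w - z by abel] at hexpand
  nlinarith [hT.inner_nonneg_left (w - x)]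

end QuadraticDistance

lemma dnorm_sq {n : ℕ} {D : Matrix (Fin n) (Fin n) ℝ} (hD : D.PosSemidef) (v : EucSp n) :
    dnorm D v ^ 2 = ⟪Matrix.toEuclideanLin D v, v⟫ :=
  Real.sq_sqrt ((Matrix.isPositive_toEuclideanLin_iff.mpr hD).inner_nonneg_left v)

lemma IsDProj.inner_le {n : ℕ} {D : Matrix (Fin n) (Fin n) ℝ} (hD : D.PosSemidef)
    {C : Set (EucSp n)} {v p : EucSp n} (hp : IsDProj D C v p) (c : EucSp n) (hc : c ∈ C) :
    ⟪Matrix.toEuclideanLin D (p - v), p - v⟫ ≤ ⟪Matrix.toEuclideanLin D (c - v), c - v⟫ := by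
  rw [← dnorm_sq hD, ← dnorm_sq hD]
  exact pow_le_pow_left₀ (Real.sqrt_nonneg _) (hp.2 c hc) 2

lemma Matrix.toEuclideanLin_apply_toEuclideanLin_inv {n : ℕ} {D : Matrix (Fin n) (Fin n) ℝ}
    (hD : IsUnit D.det) (v : EucSp n) :
    Matrix.toEuclideanLin D (Matrix.toEuclideanLin D⁻¹ v) = v := by
  rw [← LinearMap.comp_apply, ← Matrix.toLpLin_mul_same, Matrix.mul_nonsing_inv D hD,
    Matrix.toLpLin_one, LinearMap.id_apply]

theorem stmt11_general {n : ℕ} (C : Set (EucSp n)) (hconv : Convex ℝ C)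
    (D : Matrix (Fin n) (Fin n) ℝ) (hD : D.PosDef)
    (g : EucSp n → EucSp n)
    (x : EucSp n) (hx : x ∈ C) (hnonstat : ¬ ∀ y ∈ C, 0 ≤ ⟪g x, y - x⟫)
    (α : ℝ) (hα : 0 < α) (ζ : ℝ) (hζ : 0 < ζ ∧ ζ ≤ 1)
    (z : EucSp n) (hz : z = x - α • (Matrix.toEuclideanLin D⁻¹) (g x))
    (p : EucSp n) (hp : IsDProj D C z p)
    (w : EucSp n)
    (hw : (dnorm D (w - z)) ^ 2 ≤
      ζ * (dnorm D (p - z)) ^ 2 + (1 - ζ) * (dnorm D (x - z)) ^ 2) :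
    ⟪g x, w - x⟫ < 0 := by
  obtain ⟨y, hy, hxy⟩ : ∃ y ∈ C, ⟪g x, y - x⟫ < 0 := by simpa using hnonstat
  have hT := Matrix.isPositive_toEuclideanLin_iff.mpr hD.posSemidef
  have hxz : Matrix.toEuclideanLin D (x - z) = α • g x := by
    rw [hz, sub_sub_cancel, map_smul,
      Matrix.toEuclideanLin_apply_toEuclideanLin_inv hD.det_pos.ne'.isUnit]
  have hinner (v : EucSp n) : ⟪Matrix.toEuclideanLin D (x - z), v⟫ = α * ⟪g x, v⟫ := by
    rw [hxz, real_inner_smul_left]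
  simp only [dnorm_sq hD.posSemidef] at hw
  have hdescent := hT.inner_map_sub_neg_of_le_combination hconv hx hy
    (by rw [hinner]; exact mul_neg_of_pos_of_neg hα hxy) (hp.inner_le hD.posSemidef) hζ.1 hw
  rw [hinner] at hdescent
  exact neg_of_mul_neg_right hdescent hα.le

theorem stmt11 {n : ℕ} (C : Set (EucSp n)) (hcl : IsClosed C) (hconv : Convex ℝ C)
    (D : Matrix (Fin n) (Fin n) ℝ) (hD : D.PosDef)
    (f : EucSp n → ℝ) (g : EucSp n → EucSp n) (hf : ∀ x, HasGradientAt f (g x) x)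
    (x : EucSp n) (hx : x ∈ C) (hnonstat : ¬ ∀ y ∈ C, 0 ≤ ⟪g x, y - x⟫)
    (α : ℝ) (hα : 0 < α) (ζ : ℝ) (hζ : 0 < ζ ∧ ζ ≤ 1)
    (z : EucSp n) (hz : z = x - α • (Matrix.toEuclideanLin D⁻¹) (g x))
    (p : EucSp n) (hp : IsDProj D C z p)
    (w : EucSp n) (hwC : w ∈ C)
    (hw : (dnorm D (w - z)) ^ 2 ≤
      ζ * (dnorm D (p - z)) ^ 2 + (1 - ζ) * (dnorm D (x - z)) ^ 2) :
    ⟪g x, w - x⟫ < 0 :=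
  stmt11_general C hconv D hD g x hx hnonstat α hα ζ hζ z hz p hp w hw
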